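/- In G = ℚ ⋊_q M, let g = (c, s), let r ∈ ℚ with c ≠ r·(q(s) − 1), and let a = inl(r)⁻¹·inr(t)·inl(r) and b = inl(r)⁻¹·inr(u)·inl(r) be elements of M^r (so a and b commute). Write a⁻¹ g a = (c₁, s) and b⁻¹ g b = (c₂, s). Then the Diffie–Hellman shared key satisfies (ab)⁻¹ g (ab) = (k, s) with k = r·(q(s) − 1) + (c₁ − r·(q(s) − 1))·(c₂ − r·(q(s) − 1)) / (c − r·(q(s) − 1)); in particular, the shared key is determined by the public data g, gᵃ, gᵇ together with r. -/

import Mathlib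

/-- The semidirect product `G = ℚ ⋊_q M` of the additive group of `ℚ` by an abelian
group `M`, where `t : M` acts on `ℚ` by multiplication by `q t`.  Elements are pairs
`⟨d, t⟩` with `d : ℚ`, `t : M`, multiplied by `⟨d, t⟩ * ⟨e, u⟩ = ⟨d + q t * e, t * u⟩`. -/
@[ext]
structure QSemidirect (M : Type*) [CommGroup M] (q : M →* ℚˣ) where
  fst : ℚ
  snd : M

namespace QSemidirect

variable {M : Type*} [CommGroup M] {q : M →* ℚˣ}

instance : Mul (QSemidirect M q) :=
  ⟨fun x y => ⟨x.fst + (q x.snd : ℚ) * y.fst, x.snd * y.snd⟩⟩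

instance : One (QSemidirect M q) := ⟨⟨0, 1⟩⟩

instance : Inv (QSemidirect M q) :=
  ⟨fun x => ⟨-((q x.snd : ℚ)⁻¹ * x.fst), x.snd⁻¹⟩⟩

@[simp] lemma mul_fst (x y : QSemidirect M q) :
    (x * y).fst = x.fst + (q x.snd : ℚ) * y.fst := rfl

@[simp] lemma mul_snd (x y : QSemidirect M q) : (x * y).snd = x.snd * y.snd := rfl

@[simp] lemma one_fst : (1 : QSemidirect M q).fst = 0 := rfl

@[simp] lemma one_snd : (1 : QSemidirect M q).snd = 1 := rfl

@[simp] lemma inv_fst (x : QSemidirect M q) :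
    (x⁻¹).fst = -((q x.snd : ℚ)⁻¹ * x.fst) := rfl

@[simp] lemma inv_snd (x : QSemidirect M q) : (x⁻¹).snd = x.snd⁻¹ := rfl

instance : Group (QSemidirect M q) where
  mul_assoc x y z := by
    ext
    · simp only [mul_fst, mul_snd, map_mul, Units.val_mul]; ring
    · simp [mul_assoc]
  one_mul x := by ext <;> simp
  mul_one x := by ext <;> simp
  inv_mul_cancel x := by
    ext
    · have h : (q x.snd : ℚ) ≠ 0 := Units.ne_zero _
      simp only [mul_fst, inv_fst, inv_snd, map_inv, one_fst, Units.val_inv_eq_inv_val]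
      ring
    · simp

end QSemidirect

/-- Ko–Lee with both (commuting) secrets in the conjugated complement `Mʳ`:
the shared key `(ab)⁻¹ g (ab)` equals
`(r*(q s - 1) + (c₁ - r*(q s - 1)) * (c₂ - r*(q s - 1)) / (c - r*(q s - 1)), s)`,
hence is determined by the public data `g`, `gᵃ`, `gᵇ` together with `r`. -/
theorem koLee_key_from_public_conjugated (M : Type*) [CommGroup M] (q : M →* ℚˣ)
    (c c₁ c₂ r : ℚ) (s t u : M)
    (hc : c ≠ r * ((q s : ℚ) - 1))
    (h₁ : ((⟨r, 1⟩ : QSemidirect M q)⁻¹ * ⟨0, t⟩ * ⟨r, 1⟩)⁻¹ * ⟨c, s⟩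
        * ((⟨r, 1⟩ : QSemidirect M q)⁻¹ * ⟨0, t⟩ * ⟨r, 1⟩) = ⟨c₁, s⟩)
    (h₂ : ((⟨r, 1⟩ : QSemidirect M q)⁻¹ * ⟨0, u⟩ * ⟨r, 1⟩)⁻¹ * ⟨c, s⟩
        * ((⟨r, 1⟩ : QSemidirect M q)⁻¹ * ⟨0, u⟩ * ⟨r, 1⟩) = ⟨c₂, s⟩) :
    (((⟨r, 1⟩ : QSemidirect M q)⁻¹ * ⟨0, t⟩ * ⟨r, 1⟩)
        * ((⟨r, 1⟩ : QSemidirect M q)⁻¹ * ⟨0, u⟩ * ⟨r, 1⟩))⁻¹ * ⟨c, s⟩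
      * (((⟨r, 1⟩ : QSemidirect M q)⁻¹ * ⟨0, t⟩ * ⟨r, 1⟩)
        * ((⟨r, 1⟩ : QSemidirect M q)⁻¹ * ⟨0, u⟩ * ⟨r, 1⟩))
      = ⟨r * ((q s : ℚ) - 1)
          + (c₁ - r * ((q s : ℚ) - 1)) * (c₂ - r * ((q s : ℚ) - 1)) / (c - r * ((q s : ℚ) - 1)),
        s⟩ := by
  have hqt : (q t : ℚ) ≠ 0 := Units.ne_zero _
  have hqu : (q u : ℚ) ≠ 0 := Units.ne_zero _
  have hqs : (q s : ℚ) ≠ 0 := Units.ne_zero _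
  have hcr : c - r * ((q s : ℚ) - 1) ≠ 0 := sub_ne_zero.mpr hc
  have e₁ := congrArg QSemidirect.fst h₁
  have e₂ := congrArg QSemidirect.fst h₂
  simp only [QSemidirect.mul_fst, QSemidirect.mul_snd, QSemidirect.inv_fst,
    QSemidirect.inv_snd, map_mul, map_inv, map_one, Units.val_mul, Units.val_inv_eq_inv_val,
    Units.val_one, mul_one, one_mul, mul_zero, add_zero] at e₁ e₂
  ext
  · simp only [QSemidirect.mul_fst, QSemidirect.mul_snd, QSemidirect.inv_fst,
      QSemidirect.inv_snd, map_mul, map_inv, map_one, Units.val_mul, Units.val_inv_eq_inv_val,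
      Units.val_one, mul_one, one_mul, mul_zero, add_zero]
    field_simp at e₁ e₂ ⊢
    linear_combination ((q u : ℚ) * (c₂ - r * ((q s : ℚ) - 1))) * e₁
      + (c - r * ((q s : ℚ) - 1)) * e₂
  · simp [mul_comm, mul_assoc, mul_left_comm]
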